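/- arXiv:2510.03181 — 4 statements merged into one kernel-verified Lean document; each statement's English description precedes it below -/
import Mathlib

section
/- For every integer t ≥ 1, one has 1/√t ≤ Σ_{i=1}^t α_t^i / √i ≤ 2/√t. -/
/-- Learning rate `α_t = (H+1)/(H+t)`. -/
noncomputable def lr (H : ℕ) (t : ℕ) : ℝ := ((H : ℝ) + 1) / ((H : ℝ) + t)

/-- Weights `α_t^0 = ∏_{j=1}^t (1 - α_j)` and `α_t^i = α_i ∏_{j=i+1}^t (1 - α_j)` for `i ≥ 1`. -/
noncomputable def alphaW (H : ℕ) (t i : ℕ) : ℝ :=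
  if i = 0 then ∏ j ∈ Finset.Icc 1 t, (1 - lr H j)
  else lr H i * ∏ j ∈ Finset.Icc (i + 1) t, (1 - lr H j)

/-! The sums `S t = ∑ i ∈ [1, t], α_t^i f(i)` obey `S (t+1) = (1 - α_{t+1}) S t + α_{t+1} f(t+1)`,
and `α_1 = 1`, so the weights `α_t^i` (`1 ≤ i ≤ t`) form a probability vector. The lower bound
follows since `1/√i ≥ 1/√t` on `[1, t]`. The upper bound is preserved by the recursion because
`2 √t √(t+1) ≤ 2t + 1 ≤ H + 2t + 1`. -/

open Finset Real

lemma lr_nonneg (H t : ℕ) : 0 ≤ lr H t := by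
  unfold lr; positivity

lemma lr_one (H : ℕ) : lr H 1 = 1 := by
  unfold lr; push_cast; exact div_self (by positivity)

lemma lr_le_one (H : ℕ) {t : ℕ} (ht : 1 ≤ t) : lr H t ≤ 1 := by
  unfold lr
  rw [div_le_one (by positivity)]
  have : (1 : ℝ) ≤ t := by exact_mod_cast ht
  linarith

lemma alphaW_nonneg (H t i : ℕ) : 0 ≤ alphaW H t i := by
  have hprod : ∀ a, 1 ≤ a → 0 ≤ ∏ j ∈ Icc a t, (1 - lr H j) := fun a ha =>
    prod_nonneg fun j hj => sub_nonneg.2 (lr_le_one H (ha.trans (mem_Icc.1 hj).1))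
  unfold alphaW
  split_ifs
  · exact hprod 1 le_rfl
  · exact mul_nonneg (lr_nonneg H i) (hprod _ (by omega))

lemma alphaW_succ_of_le (H : ℕ) {t i : ℕ} (hi : i ≤ t) :
    alphaW H (t + 1) i = (1 - lr H (t + 1)) * alphaW H t i := by
  unfold alphaW
  split_ifs <;> rw [prod_Icc_succ_top (by omega)] <;> ring

lemma alphaW_self_succ (H t : ℕ) : alphaW H (t + 1) (t + 1) = lr H (t + 1) := by
  simp [alphaW]

lemma sum_alphaW_mul_succ (H t : ℕ) (f : ℕ → ℝ) :
    ∑ i ∈ Icc 1 (t + 1), alphaW H (t + 1) i * f i =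
      (1 - lr H (t + 1)) * ∑ i ∈ Icc 1 t, alphaW H t i * f i + lr H (t + 1) * f (t + 1) := by
  rw [sum_Icc_succ_top (by omega), alphaW_self_succ, mul_sum]
  congr 1
  refine sum_congr rfl fun i hi => ?_
  rw [alphaW_succ_of_le H (mem_Icc.1 hi).2, mul_assoc]

lemma sum_alphaW {H t : ℕ} (ht : 1 ≤ t) : ∑ i ∈ Icc 1 t, alphaW H t i = 1 := by
  induction t, ht using Nat.le_induction with
  | base => simp [alphaW, lr_one]
  | succ t _ ih => simpa [ih] using sum_alphaW_mul_succ H t fun _ => 1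

lemma inv_sqrt_le_sum_alphaW_div_sqrt {H t : ℕ} (ht : 1 ≤ t) :
    1 / √t ≤ ∑ i ∈ Icc 1 t, alphaW H t i / √i := by
  calc 1 / √t = ∑ i ∈ Icc 1 t, alphaW H t i / √t := by rw [← sum_div, sum_alphaW ht]
    _ ≤ ∑ i ∈ Icc 1 t, alphaW H t i / √i := by
      refine sum_le_sum fun i hi => ?_
      obtain ⟨hi1, hit⟩ := mem_Icc.1 hi
      exact div_le_div_of_nonneg_left (alphaW_nonneg H t i)
        (sqrt_pos.2 (by exact_mod_cast hi1)) (sqrt_le_sqrt (by exact_mod_cast hit))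

lemma one_sub_lr_mul_two_div_sqrt_add_le (H : ℕ) {t : ℕ} (ht : 1 ≤ t) :
    (1 - lr H (t + 1)) * (2 / √t) + lr H (t + 1) / √(t + 1 : ℕ) ≤ 2 / √(t + 1 : ℕ) := by
  set s := √t
  set u := √(t + 1 : ℕ)
  have hs : 0 < s := sqrt_pos.2 (by exact_mod_cast ht)
  have hu : 0 < u := sqrt_pos.2 (by positivity)
  have hs2 : s ^ 2 = t := sq_sqrt (by positivity)
  have hu2 : u ^ 2 = t + 1 := by rw [sq_sqrt (by positivity)]; push_cast; ring
  have hsu : 2 * s * u ≤ 2 * t + 1 := by nlinarith [sq_nonneg (s - u)]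
  have hlr : lr H (t + 1) = (H + 1) / (H + t + 1) := by unfold lr; push_cast; ring
  have hgap : 2 / u - ((1 - lr H (t + 1)) * (2 / s) + lr H (t + 1) / u) =
      s * (H + 2 * t + 1 - 2 * s * u) / ((H + t + 1) * s * u) := by
    rw [hlr]
    field_simp
    linear_combination (2 * u) * hs2
  have hgap_nonneg : 0 ≤ s * (H + 2 * t + 1 - 2 * s * u) / ((H + t + 1) * s * u) := by
    apply div_nonneg (mul_nonneg hs.le (by linarith [(Nat.cast_nonneg H : (0 : ℝ) ≤ H)]))
    positivity
  linarith

lemma sum_alphaW_div_sqrt_le {H t : ℕ} (ht : 1 ≤ t) :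
    ∑ i ∈ Icc 1 t, alphaW H t i / √i ≤ 2 / √t := by
  induction t, ht using Nat.le_induction with
  | base => norm_num [alphaW, lr_one]
  | succ t ht ih =>
    have hrec := sum_alphaW_mul_succ H t fun i => (√i)⁻¹
    simp only [← div_eq_mul_inv] at hrec
    rw [hrec]
    calc (1 - lr H (t + 1)) * ∑ i ∈ Icc 1 t, alphaW H t i / √i + lr H (t + 1) / √(t + 1 : ℕ)
        ≤ (1 - lr H (t + 1)) * (2 / √t) + lr H (t + 1) / √(t + 1 : ℕ) := by
          gcongr
          exact sub_nonneg.2 (lr_le_one H (by omega))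
      _ ≤ 2 / √(t + 1 : ℕ) := one_sub_lr_mul_two_div_sqrt_add_le H ht

theorem alphaW_sqrt_sum_general (H : ℕ) (t : ℕ) (ht : 1 ≤ t) :
    1 / Real.sqrt t ≤ (∑ i ∈ Finset.Icc 1 t, alphaW H t i / Real.sqrt i) ∧
    (∑ i ∈ Finset.Icc 1 t, alphaW H t i / Real.sqrt i) ≤ 2 / Real.sqrt t :=
  ⟨inv_sqrt_le_sum_alphaW_div_sqrt ht, sum_alphaW_div_sqrt_le ht⟩

/-- `1/√t ≤ ∑_{i=1}^t α_t^i/√i ≤ 2/√t` for all `t ≥ 1`. -/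
theorem alphaW_sqrt_sum (H : ℕ) (hH : 1 ≤ H) (t : ℕ) (ht : 1 ≤ t) :
    1 / Real.sqrt t ≤ (∑ i ∈ Finset.Icc 1 t, alphaW H t i / Real.sqrt i) ∧
    (∑ i ∈ Finset.Icc 1 t, alphaW H t i / Real.sqrt i) ≤ 2 / Real.sqrt t :=
  alphaW_sqrt_sum_general H t ht
end

section
/- For every integer t ≥ 1 and every i with 1 ≤ i ≤ t, one has α_t^i ≤ 2H/t; in particular max_{1 ≤ i ≤ t} α_t^i ≤ 2H/t. -/
lemma one_sub_lr_succ (H t : ℕ) : 1 - lr H (t + 1) = t / ((H : ℝ) + t + 1) := by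
  unfold lr
  field_simp
  push_cast
  ring

lemma lr_mul_one_sub_lr_succ_le (H t : ℕ) : lr H t * (1 - lr H (t + 1)) ≤ lr H (t + 1) := by
  have hfactor : lr H t * (1 - lr H (t + 1)) = lr H (t + 1) * (t / ((H : ℝ) + t)) := by
    rw [one_sub_lr_succ]
    unfold lr
    push_cast
    ring
  rw [hfactor]
  refine mul_le_of_le_one_right (by unfold lr; positivity) ?_
  exact div_le_one_of_le₀ (le_add_of_nonneg_left (Nat.cast_nonneg H)) (by positivity)

lemma alphaW_self (H : ℕ) {i : ℕ} (hi : 0 < i) : alphaW H i i = lr H i := by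
  simp [alphaW, hi.ne']

lemma alphaW_succ (H : ℕ) {t i : ℕ} (hi : 0 < i) (hit : i ≤ t) :
    alphaW H (t + 1) i = alphaW H t i * (1 - lr H (t + 1)) := by
  simp only [alphaW, hi.ne', if_false]
  rw [Finset.prod_Icc_succ_top (by omega), mul_assoc]

lemma alphaW_le_lr (H : ℕ) {t i : ℕ} (hi : 0 < i) (hit : i ≤ t) : alphaW H t i ≤ lr H t := by
  induction t, hit using Nat.le_induction with
  | base => exact (alphaW_self H hi).le
  | succ t hit ih =>
    have hfactor : 0 ≤ 1 - lr H (t + 1) := by rw [one_sub_lr_succ]; positivity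
    calc alphaW H (t + 1) i = alphaW H t i * (1 - lr H (t + 1)) := alphaW_succ H hi hit
      _ ≤ lr H t * (1 - lr H (t + 1)) := mul_le_mul_of_nonneg_right ih hfactor
      _ ≤ lr H (t + 1) := lr_mul_one_sub_lr_succ_le H t

lemma lr_le_two_mul_div {H t : ℕ} (hH : 1 ≤ H) (ht : 1 ≤ t) : lr H t ≤ 2 * (H : ℝ) / t := by
  have hH' : (1 : ℝ) ≤ H := by exact_mod_cast hH
  have ht' : (1 : ℝ) ≤ t := by exact_mod_cast ht
  unfold lr
  rw [div_le_div_iff₀ (by positivity) (by positivity)]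
  nlinarith

theorem alphaW_le_general (H : ℕ) (hH : 1 ≤ H) (t : ℕ) :
    ∀ i : ℕ, 1 ≤ i → i ≤ t → alphaW H t i ≤ 2 * (H : ℝ) / t := by
  intro i hi hit
  exact (alphaW_le_lr H hi hit).trans (lr_le_two_mul_div hH (hi.trans hit))

/-- `α_t^i ≤ 2H/t` for all `1 ≤ i ≤ t`. -/
theorem alphaW_le (H : ℕ) (hH : 1 ≤ H) (t : ℕ) (ht : 1 ≤ t) :
    ∀ i : ℕ, 1 ≤ i → i ≤ t → alphaW H t i ≤ 2 * (H : ℝ) / t :=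
  alphaW_le_general H hH t
end

section
/- For every integer t ≥ 1, the sum of the squared weights satisfies Σ_{i=1}^t (α_t^i)² ≤ 2H/t. -/
open Finset

theorem Finset.sum_sq_le_mul_sum_of_le {ι R : Type*} [CommSemiring R] [PartialOrder R]
    [IsOrderedRing R] {s : Finset ι} {f : ι → R} {c : R} (hf : ∀ i ∈ s, 0 ≤ f i)
    (hfc : ∀ i ∈ s, f i ≤ c) : ∑ i ∈ s, f i ^ 2 ≤ c * ∑ i ∈ s, f i := by
  rw [mul_sum]
  refine sum_le_sum fun i hi => ?_
  rw [sq, mul_comm c]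
  exact mul_le_mul_of_nonneg_left (hfc i hi) (hf i hi)

namespace lr

variable (H : ℕ)

theorem nonneg (t : ℕ) : 0 ≤ lr H t := by
  unfold lr; positivity

theorem le_one {t : ℕ} (ht : 1 ≤ t) : lr H t ≤ 1 := by
  unfold lr
  rw [div_le_one (by positivity)]
  gcongr
  exact_mod_cast ht

theorem one_sub_succ (t : ℕ) : 1 - lr H (t + 1) = t / (H + t + 1) := by
  unfold lr
  push_cast
  field_simp
  ring

theorem mul_one_sub_succ_le (t : ℕ) : lr H t * (1 - lr H (t + 1)) ≤ lr H (t + 1) := by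
  calc lr H t * (1 - lr H (t + 1)) = lr H (t + 1) * (t / (H + t)) := by
        rw [one_sub_succ]; unfold lr; push_cast; ring
    _ ≤ lr H (t + 1) * 1 := by
        gcongr
        · exact nonneg H _
        · exact div_le_one_of_le₀ (by simp) (by positivity)
    _ = lr H (t + 1) := mul_one _

theorem le_two_mul_div {t : ℕ} (hH : 1 ≤ H) (ht : 1 ≤ t) : lr H t ≤ 2 * H / t := by
  have hH' : (1 : ℝ) ≤ H := by exact_mod_cast hH
  have ht' : (1 : ℝ) ≤ t := by exact_mod_cast ht
  unfold lr
  rw [div_le_div_iff₀ (by positivity) (by positivity)]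
  nlinarith

end lr

namespace alphaW

variable (H : ℕ)

theorem nonneg (t i : ℕ) : 0 ≤ alphaW H t i := by
  have hprod : ∀ k, 0 ≤ ∏ j ∈ Icc (k + 1) t, (1 - lr H j) := fun k =>
    prod_nonneg fun j hj => sub_nonneg.mpr (lr.le_one H (by grind))
  unfold alphaW
  split_ifs
  · exact hprod 0
  · exact mul_nonneg (lr.nonneg H i) (hprod i)

theorem self {i : ℕ} (hi : i ≠ 0) : alphaW H i i = lr H i := by
  simp [alphaW, hi]

theorem succ {t i : ℕ} (hit : i ≤ t) :
    alphaW H (t + 1) i = alphaW H t i * (1 - lr H (t + 1)) := by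
  unfold alphaW
  split_ifs
  · rw [prod_Icc_succ_top (by omega)]
  · rw [prod_Icc_succ_top (by omega), mul_assoc]

theorem zero_add_sum_eq_one (t : ℕ) : alphaW H t 0 + ∑ i ∈ Icc 1 t, alphaW H t i = 1 := by
  induction t with
  | zero => simp [alphaW]
  | succ t ih =>
    rw [sum_Icc_succ_top (by omega), self H t.succ_ne_zero, succ H t.zero_le,
      sum_congr rfl fun i hi => succ H (mem_Icc.mp hi).2, ← sum_mul]
    linear_combination (1 - lr H (t + 1)) * ih

theorem sum_le_one (t : ℕ) : ∑ i ∈ Icc 1 t, alphaW H t i ≤ 1 := by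
  linarith [zero_add_sum_eq_one H t, nonneg H t 0]

theorem le_lr {t i : ℕ} (hi : i ≠ 0) (hit : i ≤ t) : alphaW H t i ≤ lr H t := by
  induction t, hit using Nat.le_induction with
  | base => exact (self H hi).le
  | succ t hit ih =>
    rw [succ H hit]
    calc alphaW H t i * (1 - lr H (t + 1)) ≤ lr H t * (1 - lr H (t + 1)) :=
          mul_le_mul_of_nonneg_right ih (sub_nonneg.mpr (lr.le_one H (by omega)))
      _ ≤ lr H (t + 1) := lr.mul_one_sub_succ_le H t

end alphaW

/-- `∑_{i=1}^t (α_t^i)² ≤ 2H/t` for all `t ≥ 1`. -/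
theorem alphaW_sq_sum_le (H : ℕ) (hH : 1 ≤ H) (t : ℕ) (ht : 1 ≤ t) :
    (∑ i ∈ Finset.Icc 1 t, (alphaW H t i) ^ 2) ≤ 2 * (H : ℝ) / t := by
  calc ∑ i ∈ Icc 1 t, alphaW H t i ^ 2 ≤ lr H t * ∑ i ∈ Icc 1 t, alphaW H t i :=
        sum_sq_le_mul_sum_of_le (fun i _ => alphaW.nonneg H t i)
          fun i hi => alphaW.le_lr H (by grind) (mem_Icc.mp hi).2
    _ ≤ lr H t * 1 := by gcongr; exacts [lr.nonneg H t, alphaW.sum_le_one H t]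
    _ ≤ 2 * H / t := by simpa using lr.le_two_mul_div H hH ht
end

section
/- For every integer i ≥ 1, the series Σ_{t=i}^∞ α_t^i converges and its sum equals 1 + 1/H. -/
/-- for each `i ≥ 1`, the series `∑_{t=i}^∞ α_t^i` converges with sum `1 + 1/H`. -/
theorem alphaW_hasSum (H : ℕ) (hH : 1 ≤ H) (i : ℕ) (hi : 1 ≤ i) :
    HasSum (fun n : ℕ => alphaW H (i + n) i) (1 + 1 / (H : ℝ)) := by
  have hHR : (1:ℝ) ≤ H := by exact_mod_cast hH
  have hiR : (1:ℝ) ≤ i := by exact_mod_cast hi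
  have hHpos : (0:ℝ) < H := by linarith
  set P : ℕ → ℝ := fun n => ∏ j ∈ Finset.Icc (i+1) (i+n), (1 - lr H j) with hPdef
  set A : ℕ → ℝ := fun n => (((H:ℝ) + (i+n)) / H) * P n with hAdef
  -- factor formula
  have hfac : ∀ j : ℕ, 1 ≤ j → 1 - lr H j = ((j:ℝ)-1)/((H:ℝ)+j) := by
    intro j hj
    have hjR : (1:ℝ) ≤ j := by exact_mod_cast hj
    have hne : (H:ℝ) + j ≠ 0 := by positivity
    unfold lr
    rw [eq_div_iff hne, sub_mul, div_mul_cancel₀ _ hne]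
    ring
  have hPnn : ∀ n, 0 ≤ P n := by
    intro n
    apply Finset.prod_nonneg
    intro j hj
    have hj1 : 1 ≤ j := by
      have := (Finset.mem_Icc.mp hj).1; omega
    rw [hfac j hj1]
    have hjR : (1:ℝ) ≤ j := by exact_mod_cast hj1
    have : (0:ℝ) < (H:ℝ) + j := by positivity
    have : (0:ℝ) ≤ (j:ℝ) - 1 := by linarith
    positivity
  have hAnn : ∀ n, 0 ≤ A n := by
    intro n
    have : (0:ℝ) ≤ ((H:ℝ) + (i+n)) / H := by positivity
    exact mul_nonneg this (hPnn n)
  have hPrec : ∀ n, P (n+1) = P n * (((i:ℝ)+n)/((H:ℝ)+(i+n)+1)) := by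
    intro n
    have h1 : i + 1 ≤ i + n + 1 := by omega
    have := Finset.prod_Icc_succ_top h1 (fun j => 1 - lr H j)
    have hfn : 1 - lr H (i+n+1) = ((i:ℝ)+n)/((H:ℝ)+(i+n)+1) := by
      rw [hfac (i+n+1) (by omega)]
      push_cast
      ring_nf
    simp only [hPdef]
    rw [show i + (n+1) = i + n + 1 from rfl, this, hfn]
  have hArec : ∀ n, A (n+1) = A n * (((i:ℝ)+n)/((H:ℝ)+(i+n))) := by
    intro n
    have hne1 : (H:ℝ) + (i+n) ≠ 0 := by positivity
    have hne2 : (H:ℝ) + (i+n) + 1 ≠ 0 := by positivity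
    simp only [hAdef]
    rw [hPrec n]
    push_cast
    field_simp
    ring
  have hAdiff : ∀ n, A n - A (n+1) = P n := by
    intro n
    rw [hArec n]
    simp only [hAdef]
    have hne1 : (H:ℝ) + (i+n) ≠ 0 := by positivity
    field_simp
    ring
  -- bound: A n ≤ i * A 0 / (i + n)
  have hbound : ∀ n, A n ≤ (i:ℝ) * A 0 / ((i:ℝ) + n) := by
    intro n
    induction n with
    | zero =>
      have h : (0:ℝ) < (i:ℝ) := by linarith
      rw [Nat.cast_zero, add_zero, mul_div_cancel_left₀ _ (ne_of_gt h)]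
    | succ n ih =>
      push_cast
      rw [hArec n]
      have hipn : (0:ℝ) < (i:ℝ) + n := by positivity
      have hr1 : ((i:ℝ)+n)/((H:ℝ)+(i+n)) ≤ ((i:ℝ)+n)/((i:ℝ)+n+1) := by
        apply div_le_div_of_nonneg_left (le_of_lt hipn) (by positivity)
        linarith
      have hr0 : (0:ℝ) ≤ ((i:ℝ)+n)/((H:ℝ)+(i+n)) := by positivity
      have hA0 := hAnn 0
      have hne1 : ((i:ℝ)+n) ≠ 0 := ne_of_gt hipn
      have hne2 : ((i:ℝ)+n+1) ≠ 0 := by positivity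
      calc A n * (((i:ℝ)+n)/((H:ℝ)+(i+n)))
          ≤ ((i:ℝ) * A 0 / ((i:ℝ) + n)) * (((i:ℝ)+n)/((i:ℝ)+n+1)) := by
            apply mul_le_mul ih hr1 hr0
            positivity
        _ = (i:ℝ) * A 0 / ((i:ℝ) + ((n:ℝ)+1)) := by
            rw [div_mul_div_cancel₀ hne1, add_assoc]
  -- A tends to 0
  have hAlim : Filter.Tendsto A Filter.atTop (nhds 0) := by
    have hub : Filter.Tendsto (fun n : ℕ => (i:ℝ) * A 0 / ((i:ℝ) + n)) Filter.atTop (nhds 0) := by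
      have h1 : Filter.Tendsto (fun n : ℕ => ((i:ℝ) * A 0) / (n:ℝ)) Filter.atTop (nhds 0) :=
        tendsto_const_div_atTop_nhds_zero_nat _
      have h2 := (Filter.tendsto_add_atTop_iff_nat i).mpr h1
      refine h2.congr (fun n => ?_)
      push_cast
      ring_nf
    refine squeeze_zero (fun n => hAnn n) (fun n => hbound n) hub
  -- partial sums
  have hterm : ∀ n, alphaW H (i + n) i = lr H i * (A n - A (n+1)) := by
    intro n
    rw [hAdiff n]
    simp only [alphaW, hPdef]
    rw [if_neg (by omega)]
  have hpartial : ∀ N, ∑ n ∈ Finset.range N, alphaW H (i + n) i = lr H i * (A 0 - A N) := by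
    intro N
    calc ∑ n ∈ Finset.range N, alphaW H (i + n) i
        = ∑ n ∈ Finset.range N, (lr H i * (A n - A (n+1))) := by
          exact Finset.sum_congr rfl fun n _ => hterm n
      _ = lr H i * ∑ n ∈ Finset.range N, (A n - A (n+1)) := by
          rw [Finset.mul_sum]
      _ = lr H i * (A 0 - A N) := by rw [Finset.sum_range_sub' A N]
  have hnonneg : ∀ n, 0 ≤ alphaW H (i + n) i := by
    intro n
    rw [hterm n, hAdiff n]
    have hlr : 0 ≤ lr H i := by
      unfold lr
      positivity
    exact mul_nonneg hlr (hPnn n)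
  rw [hasSum_iff_tendsto_nat_of_nonneg hnonneg]
  have heq : (fun N : ℕ => ∑ n ∈ Finset.range N, alphaW H (i + n) i)
      = fun N => lr H i * (A 0 - A N) := funext hpartial
  rw [heq]
  have hfinal : lr H i * (A 0 - 0) = 1 + 1/(H:ℝ) := by
    simp only [hAdef, hPdef, sub_zero]
    rw [Nat.cast_zero, add_zero]
    rw [show Finset.Icc (i+1) (i+0) = ∅ from by rw [add_zero]; exact Finset.Icc_eq_empty (by omega)]
    rw [Finset.prod_empty, mul_one]
    unfold lr
    have hne : (H:ℝ) + i ≠ 0 := by positivity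
    field_simp
  rw [← hfinal]
  exact (tendsto_const_nhds.sub hAlim).const_mul _
end
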